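/- The 2×2 matrix L = (1/d)·[[γ_o γ_m/4 - g²n, i g√(n γ_o γ_m)], [i g√(n γ_o γ_m), γ_o γ_m/4 - g²n]] with d = γ_o γ_m/4 + g²n is unitary for all positive reals γ_o, γ_m, g, n, and satisfies |L₀₁|² + |L₀₀|² = 1 with |L₀₁|² = η, where η = g²n γ_o γ_m / d². -/

import Mathlib

open Matrix Complex

lemma aux_unitary (a b d : ℝ) (hd : d ≠ 0) (h : a ^ 2 + b ^ 2 = d ^ 2) :
    ((d : ℂ)⁻¹ • !![(a : ℂ), Complex.I * (b : ℝ); Complex.I * (b : ℝ), (a : ℂ)]) *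
      ((d : ℂ)⁻¹ • !![(a : ℂ), Complex.I * (b : ℝ); Complex.I * (b : ℝ), (a : ℂ)])ᴴ = 1 := by
  have hdC : (d : ℂ) ≠ 0 := by exact_mod_cast hd
  have hC : (a : ℂ) ^ 2 + (b : ℂ) ^ 2 = (d : ℂ) ^ 2 := by exact_mod_cast h
  ext i j
  fin_cases i <;> fin_cases j <;>
    simp [Matrix.mul_apply, Fin.sum_univ_two, Matrix.one_apply, _root_.map_mul, map_inv₀,
      Complex.conj_ofReal, Complex.conj_I] <;>
    field_simp <;>
    ring_nf <;>
    simp only [Complex.I_sq] <;>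
    first
    | linear_combination hC
    | linear_combination ((d:ℂ)^2) * hC

noncomputable def Lmat (γo γm g n : ℝ) : Matrix (Fin 2) (Fin 2) ℂ :=
  ((γo * γm / 4 + g ^ 2 * n : ℝ) : ℂ)⁻¹ •
    !![((γo * γm / 4 - g ^ 2 * n : ℝ) : ℂ), Complex.I * (g * Real.sqrt (n * γo * γm) : ℝ);
       Complex.I * (g * Real.sqrt (n * γo * γm) : ℝ), ((γo * γm / 4 - g ^ 2 * n : ℝ) : ℂ)]

theorem Lmat_unitary_and_efficiency (γo γm g n : ℝ)
    (hγo : 0 < γo) (hγm : 0 < γm) (hg : 0 < g) (hn : 0 < n) :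
    Lmat γo γm g n * (Lmat γo γm g n)ᴴ = 1 ∧
    ‖Lmat γo γm g n 0 1‖ ^ 2 + ‖Lmat γo γm g n 0 0‖ ^ 2 = 1 ∧
    ‖Lmat γo γm g n 0 1‖ ^ 2 =
      g ^ 2 * n * γo * γm / (γo * γm / 4 + g ^ 2 * n) ^ 2 := by
  have hs2 : Real.sqrt (n * γo * γm) ^ 2 = n * γo * γm := Real.sq_sqrt (by positivity)
  have hd : (0:ℝ) < γo * γm / 4 + g ^ 2 * n := by positivity
  have hdne : (γo * γm / 4 + g ^ 2 * n : ℝ) ≠ 0 := ne_of_gt hd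
  have key : (γo * γm / 4 - g ^ 2 * n) ^ 2 + (g * Real.sqrt (n * γo * γm)) ^ 2 =
      (γo * γm / 4 + g ^ 2 * n) ^ 2 := by rw [mul_pow, hs2]; ring
  have e01 : Lmat γo γm g n 0 1 =
      ((γo * γm / 4 + g ^ 2 * n : ℝ) : ℂ)⁻¹ * (Complex.I * (g * Real.sqrt (n * γo * γm) : ℝ)) := by
    simp [Lmat]
  have e00 : Lmat γo γm g n 0 0 =
      ((γo * γm / 4 + g ^ 2 * n : ℝ) : ℂ)⁻¹ * ((γo * γm / 4 - g ^ 2 * n : ℝ) : ℂ) := by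
    simp [Lmat]
  have h01 : ‖Lmat γo γm g n 0 1‖ ^ 2 =
      g ^ 2 * n * γo * γm / (γo * γm / 4 + g ^ 2 * n) ^ 2 := by
    rw [e01, norm_mul, norm_mul, norm_inv, Complex.norm_I, Complex.norm_real, Real.norm_eq_abs,
      Complex.norm_real, Real.norm_eq_abs, abs_of_pos hd, one_mul, mul_pow, inv_pow]
    rw [_root_.sq_abs, mul_pow, hs2, inv_mul_eq_div]
    ring
  have h00 : ‖Lmat γo γm g n 0 0‖ ^ 2 =
      (γo * γm / 4 - g ^ 2 * n) ^ 2 / (γo * γm / 4 + g ^ 2 * n) ^ 2 := by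
    rw [e00, norm_mul, norm_inv, Complex.norm_real, Real.norm_eq_abs, Complex.norm_real,
      Real.norm_eq_abs, abs_of_pos hd,
      mul_pow, inv_pow, _root_.sq_abs, inv_mul_eq_div]
  refine ⟨aux_unitary _ _ _ hdne key, ?_, h01⟩
  rw [h01, h00]
  rw [← add_div, div_eq_one_iff_eq (by positivity), ← key, mul_pow, hs2]
  ring
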